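/- arXiv:2602.02954 — 3 statements merged into one kernel-verified Lean document; each statement's English description precedes it below -/
import Mathlib

section
/- If B is a proper F_p-subalgebra of a finite commutative semisimple F_p-algebra A, then the restriction map from the set of F_p-algebra homomorphisms A → closure(F_p) to the set of F_p-algebra homomorphisms B → closure(F_p), given by φ ↦ φ|_B, is not injective. -/
open Module

attribute [local instance] IsArtinianRing.fieldOfSubtypeIsMaximal

/-- A commutative semisimple ring is reduced. -/
lemma aux_isReduced_of_isSemisimpleRing (C : Type) [CommRing C] [IsSemisimpleRing C] :
    IsReduced C := by
  constructor
  intro x hx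
  obtain ⟨n, hn⟩ := hx
  obtain ⟨e, he, hspan⟩ := IsSemisimpleRing.ideal_eq_span_idempotent (Ideal.span ({x} : Set C))
  have hmem : e ∈ Ideal.span ({x} : Set C) := by
    rw [hspan]; exact Ideal.subset_span rfl
  obtain ⟨r, hr⟩ := Ideal.mem_span_singleton'.mp hmem
  have he0 : e = 0 := by
    cases n with
    | zero =>
      have h1 : (1 : C) = 0 := by simpa using hn
      calc e = e * 1 := by ring
        _ = 0 := by rw [h1, mul_zero]
    | succ m =>
      have hp : e ^ (m + 1) = e := he.pow_succ_eq m
      calc e = e ^ (m + 1) := hp.symm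
        _ = (r * x) ^ (m + 1) := by rw [hr]
        _ = r ^ (m + 1) * x ^ (m + 1) := by ring
        _ = 0 := by rw [hn, mul_zero]
  have hx0 : x ∈ Ideal.span ({e} : Set C) := by
    rw [← hspan]; exact Ideal.subset_span rfl
  rw [he0] at hx0
  obtain ⟨a, ha⟩ := Ideal.mem_span_singleton'.mp hx0
  simpa using ha.symm

/-- Counting: for a finite reduced commutative `ZMod p`-algebra `C`, the set of
algebra homs into the algebraic closure is finite and has cardinality `finrank C`. -/
lemma aux_card_algHom (p : ℕ) [Fact p.Prime] (C : Type) [CommRing C] [Algebra (ZMod p) C]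
    [Finite C] [IsReduced C] :
    Finite (C →ₐ[ZMod p] AlgebraicClosure (ZMod p)) ∧
      Nat.card (C →ₐ[ZMod p] AlgebraicClosure (ZMod p)) = finrank (ZMod p) C := by
  classical
  set K := AlgebraicClosure (ZMod p)
  set ι := {I : Ideal C | I.IsMaximal} with hι
  haveI : Finite ι := (IsArtinianRing.setOfPred_isMaximal_finite C).to_subtype
  haveI : Fintype ι := Fintype.ofFinite ι
  letI : ∀ I : ι, Field (C ⧸ I.1) := fun I => haveI : I.1.IsMaximal := I.2; Ideal.Quotient.field I.1
  haveI : ∀ I : ι, Finite (C ⧸ I.1) := fun I => Quotient.finite _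
  haveI : ∀ I : ι, FiniteDimensional (ZMod p) (C ⧸ I.1) := fun I => Module.Finite.of_finite
  -- the assembling map
  let g : (Σ I : ι, (C ⧸ I.1 →ₐ[ZMod p] K)) → (C →ₐ[ZMod p] K) :=
    fun x => x.2.comp (Ideal.Quotient.mkₐ (ZMod p) x.1.1)
  have hker : ∀ (I : ι) (ψ : C ⧸ I.1 →ₐ[ZMod p] K) (c : C),
      g ⟨I, ψ⟩ c = 0 ↔ c ∈ I.1 := by
    intro I ψ c
    have hinj : Function.Injective ψ := ψ.toRingHom.injective
    constructor
    · intro hc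
      have : ψ (Ideal.Quotient.mk I.1 c) = ψ 0 := by simpa [g] using hc
      have := hinj this
      rwa [Ideal.Quotient.eq_zero_iff_mem] at this
    · intro hc
      have : Ideal.Quotient.mk I.1 c = 0 := (Ideal.Quotient.eq_zero_iff_mem).2 hc
      simp [g, Ideal.Quotient.mkₐ_eq_mk, this]
  have hg : Function.Bijective g := by
    constructor
    · rintro ⟨I, ψ⟩ ⟨J, χ⟩ hIJ
      have hIeqJ : I = J := by
        apply Subtype.ext
        ext c
        rw [← hker I ψ c, ← hker J χ c, hIJ]
      subst hIeqJ
      have hψχ : ψ = χ := by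
        apply AlgHom.ext
        intro y
        obtain ⟨c, rfl⟩ := Ideal.Quotient.mk_surjective y
        exact DFunLike.congr_fun hIJ c
      rw [hψχ]
    · intro φ
      have hprime : (RingHom.ker (φ : C →+* K)).IsPrime := RingHom.ker_isPrime _
      haveI := hprime
      have hmax : (RingHom.ker (φ : C →+* K)).IsMaximal :=
        IsArtinianRing.isMaximal_of_isPrime _
      refine ⟨⟨⟨RingHom.ker (φ : C →+* K), hmax⟩,
        Ideal.Quotient.liftₐ _ φ (fun a ha => ha)⟩, ?_⟩
      exact Ideal.Quotient.liftₐ_comp _ φ _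
  haveI hfin : Finite (C →ₐ[ZMod p] K) := Finite.of_surjective g hg.2
  refine ⟨hfin, ?_⟩
  -- separability instances
  haveI : ∀ I : ι, Algebra.IsAlgebraic (ZMod p) (C ⧸ I.1) := fun I =>
    Algebra.IsAlgebraic.of_finite _ _
  haveI : ∀ I : ι, Algebra.IsSeparable (ZMod p) (C ⧸ I.1) := fun I => inferInstance
  have hcard : Nat.card (C →ₐ[ZMod p] K) = ∑ I : ι, finrank (ZMod p) (C ⧸ I.1) := by
    rw [← Nat.card_eq_of_bijective g hg]
    rw [Nat.card_eq_fintype_card, Fintype.card_sigma]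
    congr 1
    funext I
    rw [AlgHom.card]
  -- the linear equivalence from equivPi
  let e : C ≃+* ∀ I : ι, C ⧸ I.1 := (IsArtinianRing.equivPi C).toRingEquiv.trans
    (RingEquiv.piCongrLeft (fun I : ι => C ⧸ I.1) (MaximalSpectrum.equivSubtype C))
  have halg : ∀ r : ZMod p, e (algebraMap (ZMod p) C r)
      = algebraMap (ZMod p) (∀ I : ι, C ⧸ I.1) r := fun r =>
    RingHom.congr_fun
      (RingHom.ext_zmod ((e : C →+* ∀ I : ι, C ⧸ I.1).comp (algebraMap (ZMod p) C))
        (algebraMap (ZMod p) (∀ I : ι, C ⧸ I.1))) r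
  let le : C ≃ₗ[ZMod p] (∀ I : ι, C ⧸ I.1) :=
    { e.toAddEquiv with
      map_smul' := fun r x => by
        show e (r • x) = r • e x
        rw [Algebra.smul_def, Algebra.smul_def, map_mul, halg] }
  rw [hcard, le.finrank_eq, finrank_pi_fintype]

/-- If `B` is a proper subalgebra of a finite commutative semisimple `F_p`-algebra `A`,
then restriction of `F_p`-algebra homomorphisms into an algebraic closure of `F_p`
from `A` to `B` is not injective. -/
theorem stmt_5 (p : ℕ) [Fact p.Prime] (A : Type) [CommRing A] [Algebra (ZMod p) A]
    [Finite A] [IsSemisimpleRing A] (B : Subalgebra (ZMod p) A) (hB : B ≠ ⊤) :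
    ¬ Function.Injective
      (fun φ : A →ₐ[ZMod p] AlgebraicClosure (ZMod p) => φ.comp B.val) := by
  intro h
  haveI : IsReduced A := aux_isReduced_of_isSemisimpleRing A
  haveI : IsReduced B := by
    constructor
    intro x hx
    have hxA : IsNilpotent (B.val x) := hx.map B.val
    have : B.val x = 0 := IsReduced.eq_zero _ hxA
    exact Subtype.ext (by simpa using this)
  obtain ⟨hfinA, hcardA⟩ := aux_card_algHom p A
  obtain ⟨hfinB, hcardB⟩ := aux_card_algHom p B
  haveI := hfinA; haveI := hfinB
  have hle : Nat.card (A →ₐ[ZMod p] AlgebraicClosure (ZMod p))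
      ≤ Nat.card (B →ₐ[ZMod p] AlgebraicClosure (ZMod p)) :=
    Nat.card_le_card_of_injective _ h
  rw [hcardA, hcardB] at hle
  have hlt : finrank (ZMod p) B < finrank (ZMod p) A := by
    rw [← B.finrank_toSubmodule]
    exact Submodule.finrank_lt (fun ht => hB (Algebra.toSubmodule_eq_top.1 ht))
  omega
end

section
/- Let R ⊆ O be an inclusion of rings that are free Z-modules of the same finite rank, with O torsion-free. If a prime p divides the index [O : R], then the natural map R/pR → O/pO induced by the inclusion is not injective, and hence (since both are F_p-vector spaces of the same dimension) not surjective. -/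
open Module

/-- The quotient of a finite free `ℤ`-module (with ring structure) by the ideal
generated by `p` is equivalent to functions from a basis index to `ZMod p`. -/
noncomputable def quotSpanEquivAux (A : Type) [CommRing A] [Module.Free ℤ A]
    [Module.Finite ℤ A] (p : ℕ) :
    (A ⧸ Ideal.span {(p : A)}) ≃ (Module.Free.ChooseBasisIndex ℤ A → ZMod p) := by
  classical
  let b := Module.Free.chooseBasis ℤ A
  set ι := Module.Free.ChooseBasisIndex ℤ A
  set I : Ideal A := Ideal.span {(p : A)} with hI
  set N' : ι → Submodule ℤ ℤ := fun _ => Ideal.span {(p : ℤ)} with hN'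
  have hmap : (I.restrictScalars ℤ).map (b.equivFun : A →ₗ[ℤ] ι → ℤ)
      = Submodule.pi Set.univ N' := by
    ext x
    simp only [Submodule.mem_map, Submodule.restrictScalars_mem, Submodule.mem_pi,
      Set.mem_univ, forall_true_left, hN', hI, Ideal.mem_span_singleton]
    constructor
    · rintro ⟨y, hy, rfl⟩ i
      obtain ⟨c, rfl⟩ := hy
      have h1 : (p : A) * c = (p : ℤ) • c := by simp
      rw [h1, map_smul]
      exact ⟨b.equivFun c i, by simp⟩
    · intro h
      choose c hc using h
      refine ⟨(p : ℤ) • b.equivFun.symm c, ⟨b.equivFun.symm c, ?_⟩, ?_⟩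
      · rw [zsmul_eq_mul]
        push_cast
        ring
      · rw [map_smul]
        simp only [LinearEquiv.coe_coe, LinearEquiv.apply_symm_apply]
        funext i
        rw [Pi.smul_apply, smul_eq_mul, ← hc i]
  exact ((Submodule.Quotient.restrictScalarsEquiv ℤ I).symm.toEquiv).trans
    (((Submodule.Quotient.equiv (I.restrictScalars ℤ) (Submodule.pi Set.univ N')
        b.equivFun hmap).toEquiv).trans
      (((Submodule.quotientPi N').toEquiv).trans
        (Equiv.piCongrRight fun _ => (Int.quotientSpanNatEquivZMod p).toEquiv)))

lemma finite_quotSpan (A : Type) [CommRing A] [Module.Free ℤ A] [Module.Finite ℤ A]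
    (p : ℕ) [NeZero p] : Finite (A ⧸ Ideal.span {(p : A)}) :=
  Finite.of_equiv _ (quotSpanEquivAux A p).symm

lemma card_quotSpan (A : Type) [CommRing A] [Module.Free ℤ A] [Module.Finite ℤ A]
    (p : ℕ) [NeZero p] :
    Nat.card (A ⧸ Ideal.span {(p : A)}) = p ^ Module.finrank ℤ A := by
  rw [Nat.card_congr (quotSpanEquivAux A p), Nat.card_eq_fintype_card, Fintype.card_fun,
    ZMod.card, Module.finrank_eq_card_chooseBasisIndex ℤ A]

/-- Let `R ⊆ O` be rings that are free `ℤ`-modules of the same finite rank, with `O`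
torsion-free.  If a prime `p` divides the index `[O : R]`, then the natural map
`R/pR → O/pO` is neither injective nor surjective. -/
theorem stmt_6 (O : Type) [CommRing O] [Module.Free ℤ O] [Module.Finite ℤ O]
    [NoZeroSMulDivisors ℤ O] (R : Subring O) [Module.Free ℤ R] [Module.Finite ℤ R]
    (hrank : Module.finrank ℤ R = Module.finrank ℤ O)
    (p : ℕ) (hp : p.Prime) (hdvd : p ∣ Nat.card (O ⧸ R.toAddSubgroup))
    (f : R ⧸ (Ideal.span {(p : R)}) →+* O ⧸ (Ideal.span {(p : O)}))
    (hf : ∀ x : R, f (Ideal.Quotient.mk _ x) = Ideal.Quotient.mk _ (x : O)) :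
    ¬ Function.Injective f ∧ ¬ Function.Surjective f := by
  haveI : Fact p.Prime := ⟨hp⟩
  haveI : NeZero p := ⟨hp.ne_zero⟩
  -- the submodule corresponding to R
  set S : Submodule ℤ O := AddSubgroup.toIntSubmodule R.toAddSubgroup with hS
  have eS : (O ⧸ R.toAddSubgroup) ≃ (O ⧸ S) := Equiv.refl _
  -- S is linearly equivalent to R
  let e2 : S ≃ₗ[ℤ] R :=
    { toFun := fun x => ⟨x.1, x.2⟩
      invFun := fun x => ⟨x.1, x.2⟩
      map_add' := fun _ _ => rfl
      map_smul' := fun _ _ => rfl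
      left_inv := fun _ => rfl
      right_inv := fun _ => rfl }
  -- O ⧸ R is finite
  haveI : Finite (O ⧸ S) := by
    haveI : Module.Finite ℤ S := Module.Finite.equiv e2.symm
    refine Module.finite_of_fg_torsion _ ?_
    rw [← Module.finrank_eq_zero_iff_isTorsion (R := ℤ)]
    have h1 := rank_quotient_add_rank_of_isDomain (R := ℤ) (M := O) S
    have h2 := congrArg Cardinal.toNat h1
    rw [Cardinal.toNat_add (Module.rank_lt_aleph0 ℤ _) (Module.rank_lt_aleph0 ℤ _)] at h2
    have h3 : Module.finrank ℤ S = Module.finrank ℤ R := e2.finrank_eq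
    simp only [Module.finrank] at h3 hrank ⊢
    omega
  haveI : Finite (O ⧸ R.toAddSubgroup) := Finite.of_equiv _ eS.symm
  haveI : Fintype (O ⧸ R.toAddSubgroup) := Fintype.ofFinite _
  -- find an element of order p in O ⧸ R
  obtain ⟨g, hg⟩ := exists_prime_addOrderOf_dvd_card (G := O ⧸ R.toAddSubgroup) p
    (by rwa [Nat.card_eq_fintype_card] at hdvd)
  obtain ⟨x, rfl⟩ := QuotientAddGroup.mk'_surjective R.toAddSubgroup g
  have hxR : x ∉ R := by
    intro h
    have h0 : QuotientAddGroup.mk' R.toAddSubgroup x = 0 :=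
      (QuotientAddGroup.eq_zero_iff x).mpr h
    rw [h0, addOrderOf_zero] at hg
    exact hp.one_lt.ne' hg.symm
  have hpx : p • x ∈ R := by
    have h0 : QuotientAddGroup.mk' R.toAddSubgroup (p • x) = 0 := by
      rw [map_nsmul, ← hg]
      exact addOrderOf_nsmul_eq_zero _
    exact (QuotientAddGroup.eq_zero_iff _).mp h0
  set r : R := ⟨p • x, hpx⟩ with hr
  have key : f (Ideal.Quotient.mk _ r) = 0 := by
    rw [hf]
    rw [Ideal.Quotient.eq_zero_iff_mem, Ideal.mem_span_singleton]
    refine ⟨x, ?_⟩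
    show (p • x : O) = (p : O) * x
    rw [nsmul_eq_mul]
  have hne : Ideal.Quotient.mk (Ideal.span {(p : R)}) r ≠ 0 := by
    intro h
    rw [Ideal.Quotient.eq_zero_iff_mem, Ideal.mem_span_singleton] at h
    obtain ⟨s, hs⟩ := h
    apply hxR
    have hsval : (p • x : O) = (p : O) * (s : O) := by
      have := congrArg (Subtype.val : R → O) hs
      simpa [hr] using this
    have hz : (p : ℤ) • x = (p : ℤ) • (s : O) := by
      rw [natCast_zsmul, natCast_zsmul, hsval, nsmul_eq_mul]
    have hx : x = (s : O) :=
      smul_right_injective O (r := (p : ℤ)) (Int.natCast_ne_zero.mpr hp.ne_zero) hz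
    rw [hx]
    exact s.2
  have hni : ¬ Function.Injective f := by
    intro hinj
    apply hne
    apply hinj
    rw [key, map_zero]
  refine ⟨hni, fun hsurj => hni ?_⟩
  haveI : Finite (R ⧸ Ideal.span {(p : R)}) := finite_quotSpan R p
  have hcard : Nat.card (R ⧸ Ideal.span {(p : R)}) = Nat.card (O ⧸ Ideal.span {(p : O)}) := by
    rw [card_quotSpan R p, card_quotSpan O p, hrank]
  exact ((Nat.bijective_iff_surjective_and_card f).mpr ⟨hsurj, hcard⟩).injective
end

section
/- Let K be a number field with ring of integers O, R ⊆ O a subring generated by a set S of elements, P a prime ideal of O of residue characteristic p, and σ an automorphism of K/Q with σ(s) ≡ s (mod P) for all s ∈ S. If p does not divide [O : R] (where R has finite index in O), then σ(P) ⊆ P and σ acts trivially on O/P, i.e., σ(y) ≡ y (mod P) for all y ∈ O. -/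
/-!
Since `σ` is a ring map, the set where `σ ≡ id (mod P)` is a subring, so it contains
`R = ℤ[S]`. Multiplication by `m = [O : R]` sends `O` into `R`, hence `m (σ y - y) ∈ P` for
every `y ∈ O`; as `p ∈ P` and `p ∤ m`, `m ∉ P`, and primality of `P` gives `σ y - y ∈ P`.
-/

open NumberField

section CongruenceModIdeal

variable {A : Type*} [CommRing A] (σ : A →+* A) {P : Ideal A}

theorem sub_mem_of_mem_subring_closure {S : Set A} (hσ : ∀ s ∈ S, σ s - s ∈ P) {x : A}
    (hx : x ∈ Subring.closure S) : σ x - x ∈ P := by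
  have hS : Set.EqOn ((Ideal.Quotient.mk P).comp σ) (Ideal.Quotient.mk P) S := fun s hs =>
    Ideal.Quotient.mk_eq_mk_iff_sub_mem _ _ |>.mpr (hσ s hs)
  exact (Ideal.Quotient.mk_eq_mk_iff_sub_mem _ _).mp (RingHom.eqOn_set_closure hS hx)

theorem sub_mem_of_nsmul_mem_subring [P.IsPrime] {R : Subring A} {n : ℕ} (hnP : (n : A) ∉ P)
    (hnR : ∀ y : A, n • y ∈ R) (hσ : ∀ x ∈ R, σ x - x ∈ P) (y : A) : σ y - y ∈ P := by
  have hny : (n : A) * (σ y - y) ∈ P := by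
    simpa [nsmul_eq_mul, mul_sub] using hσ _ (hnR y)
  exact (Ideal.IsPrime.mem_or_mem ‹_› hny).resolve_left hnP

theorem map_mem_of_sub_mem (hσ : ∀ y, σ y - y ∈ P) {x : A} (hx : x ∈ P) : σ x ∈ P := by
  simpa using P.add_mem (hσ x) hx

end CongruenceModIdeal

theorem stmt_12_general (K : Type) [Field K] [NumberField K]
    (R : Subring (𝓞 K)) (S : Set (𝓞 K)) (hS : Subring.closure S = R)
    (P : Ideal (𝓞 K)) (hP : P.IsPrime) (p : ℕ) (hp : p.Prime) (hpP : (p : 𝓞 K) ∈ P)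
    (hnd : ¬ p ∣ Nat.card (𝓞 K ⧸ R.toAddSubgroup))
    (σ : 𝓞 K ≃ₐ[ℤ] 𝓞 K) (hσ : ∀ s ∈ S, σ s - s ∈ P) :
    (∀ x ∈ P, σ x ∈ P) ∧ ∀ y : 𝓞 K, σ y - y ∈ P := by
  have hmP : (R.toAddSubgroup.index : 𝓞 K) ∉ P :=
    hP.notMem_of_isCoprime_of_mem (hp.coprime_iff_not_dvd.mpr hnd).cast hpP
  have hR : ∀ x ∈ R, (σ : 𝓞 K →+* 𝓞 K) x - x ∈ P := fun x hx =>
    sub_mem_of_mem_subring_closure _ hσ (hS ▸ hx)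
  have hO : ∀ y, (σ : 𝓞 K →+* 𝓞 K) y - y ∈ P :=
    sub_mem_of_nsmul_mem_subring _ hmP R.toAddSubgroup.nsmul_index_mem hR
  exact ⟨fun x => map_mem_of_sub_mem _ hO, hO⟩

/-- Let `K` be a number field with ring of integers `O`, `R ⊆ O` a subring of finite
index generated (as a ring) by a set `S`, `P` a prime of `O` of residue characteristic
`p`, and `σ` an automorphism of `K/ℚ` (viewed on `O`) with `σ(s) ≡ s (mod P)` for all
`s ∈ S`.  If `p` does not divide `[O : R]`, then `σ(P) ⊆ P` and `σ` acts trivially on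
`O/P`, i.e. `σ(y) ≡ y (mod P)` for all `y ∈ O`. -/
theorem stmt_12 (K : Type) [Field K] [NumberField K]
    (R : Subring (𝓞 K)) (S : Set (𝓞 K)) (hS : Subring.closure S = R)
    [Finite (𝓞 K ⧸ R.toAddSubgroup)]
    (P : Ideal (𝓞 K)) (hP : P.IsPrime) (p : ℕ) (hp : p.Prime) (hpP : (p : 𝓞 K) ∈ P)
    (hnd : ¬ p ∣ Nat.card (𝓞 K ⧸ R.toAddSubgroup))
    (σ : 𝓞 K ≃ₐ[ℤ] 𝓞 K) (hσ : ∀ s ∈ S, σ s - s ∈ P) :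
    (∀ x ∈ P, σ x ∈ P) ∧ ∀ y : 𝓞 K, σ y - y ∈ P :=
  stmt_12_general K R S hS P hP p hp hpP hnd σ hσ
end
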